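/- Let r be a nonzero rational number. If S is a subset of ℚ that contains 0 and r, and is closed under addition, negation, the r-scaled multiplication x ⊛ y := x * y / r, and r-scaled inversion (for every nonzero x ∈ S, the element r^2 / x belongs to S), then S = ℚ. That is, the r-scaled rational structure is a smallest field: it has no proper substructure closed under its scaled field operations. -/

import Mathlib

/-!
Dividing by `r` is an isomorphism from the `r`-scaled structure onto the ordinary field `ℚ`,
so `S / r` is a subfield of `ℚ`; the prime field `ℚ` has no proper subfield.
-/

def Subfield.ofScaledClosed {K : Type*} [Field K] (r : K) (hr : r ≠ 0) (S : Set K)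
    (h0 : (0 : K) ∈ S) (h1 : r ∈ S)
    (hadd : ∀ x ∈ S, ∀ y ∈ S, x + y ∈ S)
    (hneg : ∀ x ∈ S, -x ∈ S)
    (hmul : ∀ x ∈ S, ∀ y ∈ S, x * y / r ∈ S)
    (hinv : ∀ x ∈ S, x ≠ 0 → r ^ 2 / x ∈ S) : Subfield K where
  carrier := {x | r * x ∈ S}
  zero_mem' := by simpa using h0
  one_mem' := by simpa using h1
  add_mem' {a b} ha hb := by simpa only [Set.mem_ofPred_eq, mul_add] using hadd _ ha _ hb
  neg_mem' {a} ha := by simpa only [Set.mem_ofPred_eq, mul_neg] using hneg _ ha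
  mul_mem' {a b} ha hb := by
    have h := hmul _ ha _ hb
    rwa [mul_mul_mul_comm, mul_div_right_comm, mul_div_cancel_right₀ _ hr] at h
  inv_mem' a ha := by
    rcases eq_or_ne a 0 with rfl | ha0
    · simpa using h0
    have h := hinv _ ha (mul_ne_zero hr ha0)
    rwa [sq, mul_div_mul_left _ _ hr, div_eq_mul_inv] at h

/-- The `r`-scaled rational structure is a smallest field: any subset of `ℚ`
containing `0` and the scaled identity `r`, closed under addition, negation,
the scaled multiplication `x ⊛ y := x * y / r`, and scaled inversion
`x ↦ r^2 / x`, is all of `ℚ`. -/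
theorem scaled_rat_smallest_field (r : ℚ) (hr : r ≠ 0) (S : Set ℚ)
    (h0 : (0 : ℚ) ∈ S) (h1 : r ∈ S)
    (hadd : ∀ x ∈ S, ∀ y ∈ S, x + y ∈ S)
    (hneg : ∀ x ∈ S, -x ∈ S)
    (hmul : ∀ x ∈ S, ∀ y ∈ S, x * y / r ∈ S)
    (hinv : ∀ x ∈ S, x ≠ 0 → r ^ 2 / x ∈ S) :
    S = Set.univ := by
  have htop : Subfield.ofScaledClosed r hr S h0 h1 hadd hneg hmul hinv = ⊤ :=
    Subsingleton.elim _ _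
  refine Set.eq_univ_of_forall fun x => ?_
  have hx : r * (x / r) ∈ S :=
    (htop ▸ Subfield.mem_top (x / r) :
      x / r ∈ Subfield.ofScaledClosed r hr S h0 h1 hadd hneg hmul hinv)
  rwa [mul_div_cancel₀ _ hr] at hx
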